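/- Let the data matrices X_0, X, U be generated by the system and satisfy the persistency of excitation assumption rank([X_0; U]) = mT + n, with T ≥ 1. Fix λ ∈ ℝ and define P_λ = X_0 K_U [I 0] Ker([X K_U − W Λ_λ X_0 K_U, X K_0]), i.e., P_λ = { X_0 K_U α : there exists β with X K_U α + X K_0 β = W Λ_λ X_0 K_U α }. Then P_λ = { v ∈ ℝ^n : (λ I − A)v ∈ Im(B) }; i.e., the data-driven subspace P_λ coincides with the model-based allowable eigenvector subspace associated with λ. -/

import Mathlib

/-
Both subspaces are read off trajectories of the system. Every vector `g ∈ ℝᴺ` combines the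
experiments into one trajectory with initial state `X₀ g`, inputs `U g` and states `X g`, and the
data equation `X g = W Λ_λ X₀ g` says that this trajectory is the geometric one
`x(t) = λᵗ v`, `v = X₀ g`. At time `0` that forces `(λI − A) v = B u(0)`. Conversely, if
`(λI − A) v = B w`, the input `u(t) = λᵗ w` drives `v` along `λᵗ v`; persistency of excitation
makes `[X₀; U]` onto, so this trajectory is reached by combining experiments, split into one with
zero input (in `Im K_U`) and one with zero initial state (in `Im K₀`).
-/

open Matrix

/-- The full state sequence over times `0, 1, …, T` built from the initial state `x0` and the
subsequent states `x 0 = x(1), …, x (T-1) = x(T)`. -/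
def stateSeq {n T : ℕ} (x0 : Fin n → ℝ) (x : Fin T → Fin n → ℝ) : Fin (T + 1) → Fin n → ℝ :=
  Fin.cases x0 x

/-- `(x0, u, x)` is a trajectory of the system `x(t+1) = A x(t) + B u(t)`. -/
def IsTrajectory {n m T : ℕ} (A : Matrix (Fin n) (Fin n) ℝ) (B : Matrix (Fin n) (Fin m) ℝ)
    (x0 : Fin n → ℝ) (u : Fin T → Fin m → ℝ) (x : Fin T → Fin n → ℝ) : Prop :=
  ∀ t : Fin T, x t = A.mulVec (stateSeq x0 x t.castSucc) + B.mulVec (u t)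

/-- The data matrices are generated by `N` experiments of length `T` on the system. -/
def DataGenerated {n m T N : ℕ} (A : Matrix (Fin n) (Fin n) ℝ) (B : Matrix (Fin n) (Fin m) ℝ)
    (X0 : Matrix (Fin n) (Fin N) ℝ) (X : Matrix (Fin T × Fin n) (Fin N) ℝ)
    (U : Matrix (Fin T × Fin m) (Fin N) ℝ) : Prop :=
  ∀ i : Fin N, IsTrajectory A B (fun j => X0 j i) (fun t j => U (t, j) i) (fun t j => X (t, j) i)

/-- The columns of `Kb` form a basis of `Ker M`. -/
def IsKerBasis {α β γ : Type*} [Fintype β] [Fintype γ]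
    (M : Matrix α β ℝ) (Kb : Matrix β γ ℝ) : Prop :=
  Function.Injective Kb.mulVecLin ∧ LinearMap.range Kb.mulVecLin = LinearMap.ker M.mulVecLin

/-- `Λ_λ = [I; λI; λ²I; …; λ^T I] ∈ ℝ^{n(T+1) × n}`. -/
def LamMat (T n : ℕ) (lam : ℝ) : Matrix (Fin (T + 1) × Fin n) (Fin n) ℝ :=
  Matrix.of fun p q => lam ^ (p.1 : ℕ) * (if p.2 = q then 1 else 0)

/-- `W = [0_{nT×n}  I_{nT}]`, the matrix extracting the last `nT` rows of `Λ_λ`. -/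
def Wmat (T n : ℕ) : Matrix (Fin T × Fin n) (Fin (T + 1) × Fin n) ℝ :=
  Matrix.of fun p q => if q.1 = p.1.succ ∧ q.2 = p.2 then 1 else 0

/-- The state trajectory of `x(t+1) = A x(t) + B u(t)` from initial state `x0` with input `u`. -/
def trajFrom {n m : ℕ} (A : Matrix (Fin n) (Fin n) ℝ) (B : Matrix (Fin n) (Fin m) ℝ)
    (x0 : Fin n → ℝ) (u : ℕ → Fin m → ℝ) : ℕ → Fin n → ℝ
  | 0 => x0
  | t + 1 => A.mulVec (trajFrom A B x0 u t) + B.mulVec (u t)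

section

variable {n m T : ℕ} {A : Matrix (Fin n) (Fin n) ℝ} {B : Matrix (Fin n) (Fin m) ℝ}

lemma stateSeq_zero (x0 : Fin n → ℝ) (x : Fin T → Fin n → ℝ) : stateSeq x0 x 0 = x0 := rfl

lemma stateSeq_succ (x0 : Fin n → ℝ) (x : Fin T → Fin n → ℝ) (t : Fin T) :
    stateSeq x0 x t.succ = x t := rfl

lemma stateSeq_geometric (lam : ℝ) (v : Fin n → ℝ) (s : Fin (T + 1)) :
    stateSeq v (fun t : Fin T => lam ^ ((t : ℕ) + 1) • v) s = lam ^ (s : ℕ) • v := by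
  cases s using Fin.cases with
  | zero => simp [stateSeq_zero]
  | succ t => simp [stateSeq_succ]

lemma stateSeq_sum {ι : Type*} (s : Finset ι) (c : ι → ℝ) (x0 : ι → Fin n → ℝ)
    (x : ι → Fin T → Fin n → ℝ) (r : Fin (T + 1)) :
    stateSeq (∑ i ∈ s, c i • x0 i) (∑ i ∈ s, c i • x i) r = ∑ i ∈ s, c i • stateSeq (x0 i) (x i) r := by
  cases r using Fin.cases with
  | zero => simp [stateSeq_zero]
  | succ t => simp [stateSeq_succ]

namespace IsTrajectory

lemma sum {ι : Type*} (s : Finset ι) (c : ι → ℝ) {x0 : ι → Fin n → ℝ}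
    {u : ι → Fin T → Fin m → ℝ} {x : ι → Fin T → Fin n → ℝ}
    (h : ∀ i ∈ s, IsTrajectory A B (x0 i) (u i) (x i)) :
    IsTrajectory A B (∑ i ∈ s, c i • x0 i) (∑ i ∈ s, c i • u i) (∑ i ∈ s, c i • x i) := by
  intro t
  simp only [stateSeq_sum, Finset.sum_apply, Pi.smul_apply, mulVec_sum, mulVec_smul,
    ← Finset.sum_add_distrib, ← smul_add]
  exact Finset.sum_congr rfl fun i hi => by rw [h i hi t]

lemma stateSeq_eq {x0 : Fin n → ℝ} {u : Fin T → Fin m → ℝ} {x x' : Fin T → Fin n → ℝ}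
    (h : IsTrajectory A B x0 u x) (h' : IsTrajectory A B x0 u x') (s : Fin (T + 1)) :
    stateSeq x0 x s = stateSeq x0 x' s := by
  induction s using Fin.induction with
  | zero => rfl
  | succ t ih => rw [stateSeq_succ, stateSeq_succ, h t, h' t, ih]

lemma unique {x0 : Fin n → ℝ} {u : Fin T → Fin m → ℝ} {x x' : Fin T → Fin n → ℝ}
    (h : IsTrajectory A B x0 u x) (h' : IsTrajectory A B x0 u x') : x = x' :=
  funext fun t => h.stateSeq_eq h' t.succ

lemma sub_mulVec_eq {x0 : Fin n → ℝ} {u : Fin T → Fin m → ℝ} {x : Fin T → Fin n → ℝ}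
    (h : IsTrajectory A B x0 u x) (hT : 0 < T) {lam : ℝ} (hx : x ⟨0, hT⟩ = lam • x0) :
    (lam • (1 : Matrix (Fin n) (Fin n) ℝ) - A) *ᵥ x0 = B *ᵥ u ⟨0, hT⟩ := by
  have h0 := h ⟨0, hT⟩
  rw [hx, show (⟨0, hT⟩ : Fin T).castSucc = 0 from rfl, stateSeq_zero] at h0
  rw [sub_mulVec, smul_mulVec, one_mulVec, h0, add_sub_cancel_left]

end IsTrajectory

lemma isTrajectory_geometric {lam : ℝ} {v : Fin n → ℝ} {w : Fin m → ℝ}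
    (hvw : (lam • (1 : Matrix (Fin n) (Fin n) ℝ) - A) *ᵥ v = B *ᵥ w) :
    IsTrajectory A B v (fun t : Fin T => lam ^ (t : ℕ) • w)
      (fun t => lam ^ ((t : ℕ) + 1) • v) := by
  intro t
  rw [sub_mulVec, smul_mulVec, one_mulVec, sub_eq_iff_eq_add'] at hvw
  show lam ^ ((t : ℕ) + 1) • v = _
  rw [stateSeq_geometric, Fin.val_castSucc, mulVec_smul, mulVec_smul, ← smul_add, ← hvw,
    smul_smul, pow_succ]

lemma DataGenerated.isTrajectory_mulVec {N : ℕ} {X0 : Matrix (Fin n) (Fin N) ℝ}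
    {X : Matrix (Fin T × Fin n) (Fin N) ℝ} {U : Matrix (Fin T × Fin m) (Fin N) ℝ}
    (hdata : DataGenerated A B X0 X U) (g : Fin N → ℝ) :
    IsTrajectory A B (X0 *ᵥ g) (fun t k => (U *ᵥ g) (t, k)) (fun t j => (X *ᵥ g) (t, j)) := by
  convert IsTrajectory.sum Finset.univ g fun i _ => hdata i using 1 <;>
    ext <;> simp [mulVec, dotProduct, mul_comm]

lemma Wmat_mul_LamMat_mulVec_apply (lam : ℝ) (v : Fin n → ℝ) (t : Fin T) (j : Fin n) :
    ((Wmat T n * LamMat T n lam) *ᵥ v) (t, j) = lam ^ ((t : ℕ) + 1) * v j := by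
  simp [mulVec, dotProduct, Matrix.mul_apply, Wmat, LamMat, Fintype.sum_prod_type, ite_and]

lemma Matrix.mulVecLin_surjective_of_rank_eq_card {ι κ K : Type*} [Fintype ι] [Fintype κ]
    [Field K] (M : Matrix ι κ K) (h : M.rank = Fintype.card ι) :
    Function.Surjective M.mulVecLin := by
  rw [← LinearMap.range_eq_top]
  exact Submodule.eq_top_of_finrank_eq (h.trans (Module.finrank_fintype_fun_eq_card K).symm)

namespace IsKerBasis

variable {α β γ : Type*} [Fintype β] [Fintype γ] {M : Matrix α β ℝ} {K : Matrix β γ ℝ}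

lemma mulVec_mulVec (h : IsKerBasis M K) (a : γ → ℝ) : M *ᵥ (K *ᵥ a) = 0 :=
  LinearMap.mem_ker.mp (h.2 ▸ LinearMap.mem_range_self K.mulVecLin a)

lemma exists_mulVec_eq (h : IsKerBasis M K) {g : β → ℝ} (hg : M *ᵥ g = 0) :
    ∃ a, K *ᵥ a = g :=
  LinearMap.mem_range.mp (h.2 ▸ LinearMap.mem_ker.mpr hg)

end IsKerBasis

end

/-- Under persistency of excitation and `T ≥ 1`, the data-driven allowable
eigenvector subspace
`P_λ = { X₀ K_U α : ∃ β, X K_U α + X K₀ β = W Λ_λ X₀ K_U α }`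
coincides with the model-based allowable eigenvector subspace
`{ v ∈ ℝⁿ : (λ I − A) v ∈ Im(B) }`. -/
theorem stmt6 {n m T N p q : ℕ}
    (A : Matrix (Fin n) (Fin n) ℝ) (B : Matrix (Fin n) (Fin m) ℝ)
    (X0 : Matrix (Fin n) (Fin N) ℝ) (X : Matrix (Fin T × Fin n) (Fin N) ℝ)
    (U : Matrix (Fin T × Fin m) (Fin N) ℝ)
    (hdata : DataGenerated A B X0 X U)
    (KU : Matrix (Fin N) (Fin p) ℝ) (K0 : Matrix (Fin N) (Fin q) ℝ)
    (hKU : IsKerBasis U KU) (hK0 : IsKerBasis X0 K0)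
    (hPE : (Matrix.fromRows X0 U).rank = m * T + n)
    (hT : 1 ≤ T) (lam : ℝ) :
    {v : Fin n → ℝ | ∃ (α : Fin p → ℝ) (β : Fin q → ℝ),
        X0.mulVec (KU.mulVec α) = v ∧
        X.mulVec (KU.mulVec α) + X.mulVec (K0.mulVec β) =
          (Wmat T n * LamMat T n lam).mulVec (X0.mulVec (KU.mulVec α))} =
      {v : Fin n → ℝ | ∃ w : Fin m → ℝ,
        (lam • (1 : Matrix (Fin n) (Fin n) ℝ) - A).mulVec v = B.mulVec w} := by
  ext v
  constructor
  · rintro ⟨α, β, rfl, heig⟩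
    have htraj := hdata.isTrajectory_mulVec (KU *ᵥ α + K0 *ᵥ β)
    rw [mulVec_add X0, hK0.mulVec_mulVec, add_zero] at htraj
    refine ⟨_, htraj.sub_mulVec_eq hT (funext fun j => ?_)⟩
    have h0 := congrFun heig (⟨0, hT⟩, j)
    rw [← mulVec_add, Wmat_mul_LamMat_mulVec_apply] at h0
    simpa using h0
  · rintro ⟨w, hw⟩
    have hsurj := (fromRows X0 U).mulVecLin_surjective_of_rank_eq_card (by simp [hPE]; ring)
    obtain ⟨g1, hg1⟩ := hsurj (Sum.elim v 0)
    obtain ⟨g2, hg2⟩ := hsurj (Sum.elim 0 fun tk => (lam ^ (tk.1 : ℕ) • w) tk.2)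
    simp only [mulVecLin_apply, fromRows_mulVec, Sum.elim_eq_iff] at hg1 hg2
    obtain ⟨α, rfl⟩ := hKU.exists_mulVec_eq hg1.2
    obtain ⟨β, rfl⟩ := hK0.exists_mulVec_eq hg2.1
    have htraj := hdata.isTrajectory_mulVec (KU *ᵥ α + K0 *ᵥ β)
    simp only [mulVec_add, hg1.1, hg1.2, hg2.1, hg2.2, add_zero, zero_add] at htraj
    have hX := htraj.unique (isTrajectory_geometric hw)
    refine ⟨α, β, hg1.1, funext fun ⟨t, j⟩ => ?_⟩
    rw [Wmat_mul_LamMat_mulVec_apply, hg1.1]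
    exact congrFun (congrFun hX t) j
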